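/- Any deterministic algorithm for the last zero problem wins on at most one instance along any monotone path in the conflict graph. -/

import Mathlib

/-!
Conflict is transitive: along a conflict `s → t` the last zero moves strictly to the right, so
the prefix of `s` through its last zero survives in every later instance. Hence any two
instances `J i`, `J j` with `i < j` on a monotone path are in conflict. An algorithm winning on
`J i` stops on that prefix; on `J j` it sees the same prefix and the same number of ones, but
strictly before the last zero of `J j`, so it stops too early there.
-/

/-- `r` is the (0-indexed) position of the last `0` (= `false`) of the string `s`. -/
def LastZeroAt (s : List Bool) (r : ℕ) : Prop :=
  s[r]? = some false ∧ ∀ j, r < j → j < s.length → s[j]? = some true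

/-- Instances `s` and `t` (binary strings, each containing a `0`) are in conflict:
`t` is strictly longer, has the same number of `1`s, and agrees with `s` on all
positions up to (and including) the last `0` of `s`. -/
def Conflict (s t : List Bool) : Prop :=
  s.length < t.length ∧ s.count true = t.count true ∧
    ∃ r, LastZeroAt s r ∧ s.take (r + 1) = t.take (r + 1)


/-- A deterministic algorithm wins on `I` iff, knowing the number of ones, it stops
exactly at the last `0` of `I` and not earlier. -/
def WinsOn (A : ℕ → List Bool → Bool) (I : List Bool) : Prop :=
  ∃ r, LastZeroAt I r ∧ A (I.count true) (I.take (r + 1)) = true ∧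
    ∀ j, j < r → A (I.count true) (I.take (j + 1)) = false

namespace LastZeroAt

variable {s : List Bool} {r : ℕ}

lemma lt_length (h : LastZeroAt s r) : r < s.length :=
  (List.getElem?_eq_some_iff.mp h.1).1

lemma le_of_getElem?_eq_false (h : LastZeroAt s r) {k : ℕ} (hk : s[k]? = some false) :
    k ≤ r := by
  by_contra! hrk
  have := h.2 k hrk (List.getElem?_eq_some_iff.mp hk).1
  simp_all

lemma unique {r' : ℕ} (h : LastZeroAt s r) (h' : LastZeroAt s r') : r = r' :=
  le_antisymm (h'.le_of_getElem?_eq_false h.1) (h.le_of_getElem?_eq_false h'.1)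

lemma count_true_eq (h : LastZeroAt s r) :
    s.count true = (s.take (r + 1)).count true + (s.length - (r + 1)) := by
  have hdrop : (s.drop (r + 1)).count true = (s.drop (r + 1)).length := by
    refine List.count_eq_length.mpr fun b hb => ?_
    obtain ⟨n, hn⟩ := List.mem_iff_getElem?.mp hb
    rw [List.getElem?_drop] at hn
    rw [h.2 (r + 1 + n) (by omega) (List.getElem?_eq_some_iff.mp hn).1] at hn
    exact Option.some.inj hn
  conv_lhs => rw [← List.take_append_drop (r + 1) s]
  rw [List.count_append, hdrop, List.length_drop]

end LastZeroAt

lemma exists_lastZeroAt {s : List Bool} {k : ℕ} (hk : s[k]? = some false) :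
    ∃ r, LastZeroAt s r := by
  classical
  have hks : k ≤ s.length := (List.getElem?_eq_some_iff.mp hk).1.le
  refine ⟨Nat.findGreatest (fun j => s[j]? = some false) s.length,
    Nat.findGreatest_spec (P := fun j => s[j]? = some false) hks hk, fun j hj hjs => ?_⟩
  have := Nat.findGreatest_is_greatest hj hjs.le
  rw [List.getElem?_eq_getElem hjs] at this ⊢
  simpa using this

namespace Conflict

variable {s t u : List Bool} {r : ℕ}

lemma take_eq (h : Conflict s t) (hr : LastZeroAt s r) : s.take (r + 1) = t.take (r + 1) := by
  obtain ⟨-, -, r₀, hr₀, htake⟩ := h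
  rwa [hr₀.unique hr] at htake

lemma getElem?_eq_false (h : Conflict s t) (hr : LastZeroAt s r) : t[r]? = some false := by
  rw [← List.getElem?_take_of_lt (Nat.lt_succ_self r), ← h.take_eq hr,
    List.getElem?_take_of_lt (Nat.lt_succ_self r), hr.1]

lemma exists_lastZeroAt (h : Conflict s t) : ∃ r', LastZeroAt t r' := by
  obtain ⟨r, hr, -⟩ := h.2.2
  exact _root_.exists_lastZeroAt (h.getElem?_eq_false hr)

/-- `t` has the same ones as `s` and the same prefix through the last zero of `s`, so its
extra length cannot consist of ones only. -/
lemma lastZeroAt_lt (h : Conflict s t) (hr : LastZeroAt s r) {r' : ℕ} (hr' : LastZeroAt t r') :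
    r < r' := by
  refine (hr'.le_of_getElem?_eq_false (h.getElem?_eq_false hr)).lt_of_ne fun hrr' => ?_
  subst hrr'
  have hs := hr.count_true_eq
  have ht := hr'.count_true_eq
  rw [h.take_eq hr] at hs
  have := hr.lt_length
  have := h.1
  have := h.2.1
  omega

lemma trans (hst : Conflict s t) (htu : Conflict t u) : Conflict s u := by
  obtain ⟨r, hr, -⟩ := hst.2.2
  obtain ⟨r', hr'⟩ := hst.exists_lastZeroAt
  have hrr' := hst.lastZeroAt_lt hr hr'
  refine ⟨hst.1.trans htu.1, hst.2.1.trans htu.2.1, r, hr, ?_⟩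
  have htake := congrArg (List.take (r + 1)) (htu.take_eq hr')
  rw [List.take_take, List.take_take, min_eq_left (by omega)] at htake
  rw [hst.take_eq hr, htake]

end Conflict

lemma conflict_of_lt_of_forall_conflict_succ {J : ℕ → List Bool} {q : ℕ}
    (hconf : ∀ i, i + 1 ≤ q → Conflict (J i) (J (i + 1))) {i j : ℕ} (hij : i < j) (hjq : j ≤ q) :
    Conflict (J i) (J j) := by
  induction hij with
  | refl => exact hconf i hjq
  | step _ ih => exact (ih (by omega)).trans (hconf _ hjq)

lemma WinsOn.not_winsOn_of_conflict {A : ℕ → List Bool → Bool} {s t : List Bool}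
    (hs : WinsOn A s) (h : Conflict s t) : ¬WinsOn A t := by
  rintro ⟨r', hr', -, hnot_stop⟩
  obtain ⟨r, hr, hstop, -⟩ := hs
  have := hnot_stop r (h.lastZeroAt_lt hr hr')
  rw [← h.2.1, ← h.take_eq hr, hstop] at this
  exact Bool.noConfusion this

theorem at_most_one_win_on_path_general (A : ℕ → List Bool → Bool) (q : ℕ) (J : ℕ → List Bool)
    (hconf : ∀ i, i + 1 ≤ q → Conflict (J i) (J (i + 1))) :
    ∀ i j, i < j → j ≤ q → ¬(WinsOn A (J i) ∧ WinsOn A (J j)) :=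
  fun _ _ hij hjq ⟨hi, hj⟩ =>
    hi.not_winsOn_of_conflict (conflict_of_lt_of_forall_conflict_succ hconf hij hjq) hj

/-- Along any monotone path in the conflict graph, a deterministic algorithm wins
on at most one instance. -/
theorem at_most_one_win_on_path (A : ℕ → List Bool → Bool) (q : ℕ) (J : ℕ → List Bool)
    (hlen : ∀ i ≤ q, (J i).length = (J 0).length + i)
    (hconf : ∀ i, i + 1 ≤ q → Conflict (J i) (J (i + 1))) :
    ∀ i j, i < j → j ≤ q → ¬(WinsOn A (J i) ∧ WinsOn A (J j)) :=
  at_most_one_win_on_path_general A q J hconf
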